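/- arXiv:1411.5715 — 3 statements merged into one kernel-verified Lean document; each statement's English description precedes it below -/
import Mathlib

section
/- Let ζ : ℕ → ℝ be a characteristic index with ζ(0)=0, ζ(n)>0 for n≥1, and (-1)^(d-1)(Δ^d ζ)(r) > 0 for all r ≥ 0, d ≥ 1. Suppose ζ satisfies the weak continuity condition: for all integers r ≥ 0 and d ≥ 1, (Δ^d ζ)(r+1)/(Δ^d ζ)(r) = (Δζ)(r+d)/(Δζ)(r). If ζ is normalized with (Δζ)(0) = 1 and (Δζ)(1) = ρ/(ρ+1) for some ρ > 0, then (Δζ)(r) = ρ/(ρ+r) for all r ≥ 0, i.e., ζ(n) = ρ Σ_{j=0}^{n-1} 1/(ρ+j) is the harmonic process index. -/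
/-- `d`-th iterated forward difference of the sequence `ζ`, evaluated at `r`. -/
noncomputable def fdiff (ζ : ℕ → ℝ) (d r : ℕ) : ℝ :=
  ∑ j ∈ Finset.range (d + 1), (-1 : ℝ) ^ (d - j) * (d.choose j) * ζ (r + j)

/-!
Weak continuity for `d = 2` says `(a (r+2) - a (r+1)) / (a (r+1) - a r) = a (r+2) / a r` for the
first differences `a = Δζ`. Clearing denominators, this is exactly the statement that the
reciprocals `1 / a r` form an arithmetic progression. With `a 0 = 1` and `a 1 = ρ / (ρ + 1)` the
progression is `(ρ + r) / ρ`, and summing `a` recovers `ζ`.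
-/

lemma fdiff_one (ζ : ℕ → ℝ) (r : ℕ) : fdiff ζ 1 r = ζ (r + 1) - ζ r := by
  simp [fdiff, Finset.sum_range_succ, sub_eq_neg_add]

lemma fdiff_two (ζ : ℕ → ℝ) (r : ℕ) :
    fdiff ζ 2 r = fdiff ζ 1 (r + 1) - fdiff ζ 1 r := by
  simp only [fdiff, Finset.sum_range_succ, Finset.sum_range_zero, add_assoc]
  norm_num
  ring

lemma inv_eq_two_mul_inv_sub_inv_of_div_eq {K : Type*} [Field K] {a₀ a₁ a₂ : K}
    (h₀ : a₀ ≠ 0) (h₁ : a₁ ≠ 0) (hne : a₁ ≠ a₀)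
    (h : (a₂ - a₁) / (a₁ - a₀) = a₂ / a₀) :
    a₂⁻¹ = 2 * a₁⁻¹ - a₀⁻¹ := by
  have hcross : a₂ * (2 * a₀ - a₁) = a₁ * a₀ := by
    rw [div_eq_div_iff (sub_ne_zero.mpr hne) h₀] at h
    linear_combination h
  have h₂ : a₂ ≠ 0 := by
    rintro rfl
    exact mul_ne_zero h₁ h₀ (by simpa using hcross.symm)
  field_simp
  linear_combination -hcross

lemma eq_div_add_of_sub_div_sub_eq {K : Type*} [Field K] [LinearOrder K] [IsStrictOrderedRing K]
    {a : ℕ → K} {ρ : K} (hρ : 0 < ρ)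
    (h : ∀ r, (a (r + 2) - a (r + 1)) / (a (r + 1) - a r) = a (r + 2) / a r)
    (h0 : a 0 = 1) (h1 : a 1 = ρ / (ρ + 1)) (r : ℕ) :
    a r = ρ / (ρ + r) := by
  induction r using Nat.twoStepInduction with
  | zero => simp [h0, hρ.ne']
  | one => simp [h1]
  | more r ih₀ ih₁ =>
    have hne : a (r + 1) ≠ a r := by
      rw [ih₀, ih₁]
      exact (div_lt_div_of_pos_left hρ (by positivity) (by simp)).ne
    have hstep := inv_eq_two_mul_inv_sub_inv_of_div_eq (by rw [ih₀]; positivity)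
      (by rw [ih₁]; positivity) hne (h r)
    rw [ih₀, ih₁, inv_div, inv_div] at hstep
    have harith : 2 * ((ρ + ↑(r + 1)) / ρ) - (ρ + r) / ρ = (ρ + ↑(r + 2)) / ρ := by
      push_cast
      ring
    rw [← inv_inv (a (r + 2)), hstep, harith, inv_div]

lemma eq_add_sum_fdiff_one (ζ : ℕ → ℝ) (n : ℕ) :
    ζ n = ζ 0 + ∑ j ∈ Finset.range n, fdiff ζ 1 j := by
  simp only [fdiff_one, Finset.sum_range_sub]
  ring

theorem weak_continuity_characterizes_harmonic_general (ζ : ℕ → ℝ) (ρ : ℝ) (hρ : 0 < ρ)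
    (h0 : ζ 0 = 0)
    (hwc : ∀ r d : ℕ, 1 ≤ d →
      fdiff ζ d (r + 1) / fdiff ζ d r = fdiff ζ 1 (r + d) / fdiff ζ 1 r)
    (hn0 : fdiff ζ 1 0 = 1) (hn1 : fdiff ζ 1 1 = ρ / (ρ + 1)) :
    (∀ r : ℕ, fdiff ζ 1 r = ρ / (ρ + r)) ∧
    (∀ n : ℕ, ζ n = ρ * ∑ j ∈ Finset.range n, 1 / (ρ + j)) := by
  have hΔ : ∀ r : ℕ, fdiff ζ 1 r = ρ / (ρ + r) := by
    refine eq_div_add_of_sub_div_sub_eq hρ (fun r => ?_) hn0 hn1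
    simpa only [fdiff_two] using hwc r 2 one_le_two
  refine ⟨hΔ, fun n => ?_⟩
  simp only [eq_add_sum_fdiff_one ζ n, h0, hΔ, zero_add, Finset.mul_sum, mul_one_div]

theorem weak_continuity_characterizes_harmonic (ζ : ℕ → ℝ) (ρ : ℝ) (hρ : 0 < ρ)
    (h0 : ζ 0 = 0) (hpos : ∀ n : ℕ, 1 ≤ n → 0 < ζ n)
    (hsign : ∀ r d : ℕ, 1 ≤ d → 0 < (-1 : ℝ) ^ (d - 1) * fdiff ζ d r)
    (hwc : ∀ r d : ℕ, 1 ≤ d →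
      fdiff ζ d (r + 1) / fdiff ζ d r = fdiff ζ 1 (r + d) / fdiff ζ 1 r)
    (hn0 : fdiff ζ 1 0 = 1) (hn1 : fdiff ζ 1 1 = ρ / (ρ + 1)) :
    (∀ r : ℕ, fdiff ζ 1 r = ρ / (ρ + r)) ∧
    (∀ n : ℕ, ζ n = ρ * ∑ j ∈ Finset.range n, 1 / (ρ + j)) :=
  weak_continuity_characterizes_harmonic_general ζ ρ hρ h0 hwc hn0 hn1
end

section
/- For the splitting rule q(n-1,1) = 1/n² (for n ≥ 1), the corresponding characteristic index is ζ(n) = c·n/(n+1) for some constant c > 0, and the resulting splitting probabilities are uniform: q(n-d, d) = (n-d)!·d!/(n·n!) for 1 ≤ d ≤ n. -/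
/-- Splitting probabilities derived from a characteristic index `ζ`. -/
noncomputable def splitq (ζ : ℕ → ℝ) (r d : ℕ) : ℝ :=
  (-1 : ℝ) ^ (d - 1) * fdiff ζ d r / ζ (r + d)

open fwdDiff

lemma fwdDiff_iter_inv_add_one {K : Type*} [Field K] [CharZero K] (d r : ℕ) :
    (Δ_[1])^[d] (fun n : ℕ ↦ ((n : K) + 1)⁻¹) r
      = (-1) ^ d * d.factorial * r.factorial / (r + d + 1).factorial := by
  induction d generalizing r with
  | zero =>
    have hfac : (r.factorial : K) ≠ 0 := Nat.cast_ne_zero.2 r.factorial_ne_zero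
    rw [Function.iterate_zero_apply, Nat.factorial_succ, Nat.factorial_zero]
    push_cast
    field_simp
  | succ d ih =>
    rw [Function.iterate_succ_apply', fwdDiff, ih, ih, show r + 1 + d + 1 = r + d + 1 + 1 by ring,
      show r + (d + 1) + 1 = r + d + 1 + 1 by ring, Nat.factorial_succ (r + d + 1),
      Nat.factorial_succ r, Nat.factorial_succ d]
    have hfac : ((r + d + 1).factorial : K) ≠ 0 := Nat.cast_ne_zero.2 (Nat.factorial_ne_zero _)
    have hsucc : ((r + d + 1 : ℕ) : K) + 1 ≠ 0 := Nat.cast_add_one_ne_zero _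
    push_cast at hsucc ⊢
    field_simp
    ring

lemma fwdDiff_iter_succ_const_mul_div_add_one {K : Type*} [Field K] [CharZero K] (c : K)
    (d r : ℕ) :
    (Δ_[1])^[d + 1] (fun n : ℕ ↦ c * n / (n + 1)) r
      = c * (-1) ^ d * (d + 1).factorial * r.factorial / (r + d + 2).factorial := by
  have hΔ : Δ_[1] (fun n : ℕ ↦ c * n / (n + 1))
      = (-c) • Δ_[1] (fun n : ℕ ↦ ((n : K) + 1)⁻¹) := by
    ext n
    have hn : (n : K) + 1 ≠ 0 := Nat.cast_add_one_ne_zero n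
    have hn' : ((n + 1 : ℕ) : K) + 1 ≠ 0 := Nat.cast_add_one_ne_zero _
    simp only [fwdDiff, Pi.smul_apply, smul_eq_mul]
    push_cast at hn' ⊢
    field_simp
    ring
  rw [Function.iterate_succ_apply, hΔ, fwdDiff_iter_const_smul, Pi.smul_apply,
    ← Function.iterate_succ_apply, fwdDiff_iter_inv_add_one, smul_eq_mul,
    show r + (d + 1) + 1 = r + d + 2 by ring, pow_succ]
  ring

lemma fdiff_eq_fwdDiff_iter (ζ : ℕ → ℝ) (d r : ℕ) : fdiff ζ d r = (Δ_[1])^[d] ζ r := by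
  rw [fwdDiff_iter_eq_sum_shift, fdiff]
  refine Finset.sum_congr rfl fun j _ ↦ ?_
  rw [zsmul_eq_mul, smul_eq_mul, mul_one]
  push_cast
  ring

lemma splitq_of_eq_mul_div_add_one {ζ : ℕ → ℝ} {c : ℝ} (hc : c ≠ 0)
    (hζ : ∀ n : ℕ, ζ n = c * n / (n + 1)) {r d : ℕ} (hd : 1 ≤ d) :
    splitq ζ r d = (r.factorial * d.factorial : ℝ) / ((r + d : ℕ) * (r + d).factorial) := by
  obtain ⟨e, rfl⟩ := Nat.exists_eq_add_of_le' hd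
  obtain rfl : ζ = fun n : ℕ ↦ c * n / (n + 1) := funext hζ
  have hsign : (-1 : ℝ) ^ e * (-1) ^ e = 1 := by rw [← mul_pow]; norm_num
  rw [splitq, fdiff_eq_fwdDiff_iter, fwdDiff_iter_succ_const_mul_div_add_one,
    Nat.add_sub_cancel, show r + e + 2 = r + (e + 1) + 1 by ring, Nat.factorial_succ (r + (e + 1))]
  have hfac : ((r + (e + 1)).factorial : ℝ) ≠ 0 := Nat.cast_ne_zero.2 (Nat.factorial_ne_zero _)
  have hpos : ((r + (e + 1) : ℕ) : ℝ) ≠ 0 := Nat.cast_ne_zero.2 (by omega)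
  push_cast at hpos ⊢
  field_simp
  linear_combination hsign

lemma eq_mul_div_add_one_of_splitting_rule {ζ : ℕ → ℝ} (h0 : ζ 0 = 0)
    (hrec : ∀ n : ℕ, 1 ≤ n → ζ (n + 1) = ζ n / (1 - 1 / ((n : ℝ) + 1) ^ 2)) (n : ℕ) :
    ζ n = 2 * ζ 1 * n / (n + 1) := by
  induction n with
  | zero => simp [h0]
  | succ n ih =>
    rcases Nat.eq_zero_or_pos n with rfl | hn
    · norm_num
    · have hn' : (0 : ℝ) < n := Nat.cast_pos.2 hn
      have hden : 1 - 1 / ((n : ℝ) + 1) ^ 2 = n * (n + 2) / (n + 1) ^ 2 := by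
        field_simp
        ring
      rw [hrec n hn, ih, hden]
      push_cast
      field_simp
      ring

/-- The splitting rule `q(n-1,1) = 1/n²` yields the index `ζ(n) ∝ n/(n+1)` and
the uniform splitting probabilities `q(n-d,d) = (n-d)! d! / (n ⬝ n!)`. -/
theorem uniform_splitting_rule (ζ : ℕ → ℝ) (h0 : ζ 0 = 0) (h1 : 0 < ζ 1)
    (hrec : ∀ n : ℕ, 1 ≤ n → ζ (n + 1) = ζ n / (1 - 1 / ((n : ℝ) + 1) ^ 2)) :
    (∃ c : ℝ, 0 < c ∧ ∀ n : ℕ, ζ n = c * n / (n + 1)) ∧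
    (∀ n d : ℕ, 1 ≤ d → d ≤ n →
      splitq ζ (n - d) d = ((n - d).factorial * d.factorial : ℝ) / (n * n.factorial)) := by
  have hζ := eq_mul_div_add_one_of_splitting_rule h0 hrec
  refine ⟨⟨2 * ζ 1, by positivity, hζ⟩, fun n d hd hdn ↦ ?_⟩
  rw [splitq_of_eq_mul_div_add_one (by positivity) hζ hd, Nat.sub_add_cancel hdn]
end

section
/- For ρ > 0 and β ∈ (-1,0), the sequence ζ(n) = ∫_0^1 (1-s^n) s^(ρ-1) (1-s)^(β-1) ds satisfies ζ(n) = Σ_{j=0}^{n-1} Γ(j+ρ)Γ(β+1)/Γ(j+1+β+ρ), and ζ(n)/n^(-β) converges to Γ(1+β)/(-β) as n → ∞. -/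
/-!
Writing `1 - sⁿ = (1 - s)(1 + s + ⋯ + sⁿ⁻¹)` turns `ζ n` into a sum of Beta integrals
`B(j + ρ, β + 1)`, which gives the closed form. By Gautschi's inequality (log-convexity of `Γ`)
the `j`-th term is equivalent to `Γ(β + 1) j^(-β-1)`, hence to `Γ(β + 1) / (-β)` times the
telescoping increment `(j + 1)^(-β) - j^(-β)`. These increments are positive with divergent sum,
so the equivalence survives summation (Stolz–Cesàro) and `ζ n ~ Γ(β + 1) / (-β) · n^(-β)`.
-/

open Filter Real MeasureTheory Asymptotics Topology Finset

lemma ofReal_rpow_mul_one_sub_rpow {s : ℝ} (hs : s ∈ Set.Icc (0 : ℝ) 1) (a b : ℝ) :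
    ((s ^ (a - 1) * (1 - s) ^ (b - 1) : ℝ) : ℂ) =
      (s : ℂ) ^ ((a : ℂ) - 1) * (1 - (s : ℂ)) ^ ((b : ℂ) - 1) := by
  rw [Complex.ofReal_mul, Complex.ofReal_cpow hs.1, Complex.ofReal_cpow (sub_nonneg.2 hs.2)]
  push_cast
  rfl

lemma intervalIntegrable_rpow_mul_one_sub_rpow {a b : ℝ} (ha : 0 < a) (hb : 0 < b) :
    IntervalIntegrable (fun s : ℝ => s ^ (a - 1) * (1 - s) ^ (b - 1)) volume 0 1 := by
  have h := Complex.betaIntegral_convergent (u := a) (v := b) (by simpa) (by simpa)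
  rw [intervalIntegrable_iff_integrableOn_Icc_of_le zero_le_one] at h ⊢
  refine IntegrableOn.congr_fun h.re (fun s hs => ?_) measurableSet_Icc
  simp only [← ofReal_rpow_mul_one_sub_rpow hs, RCLike.re_to_complex, Complex.ofReal_re]

lemma integral_rpow_mul_one_sub_rpow {a b : ℝ} (ha : 0 < a) (hb : 0 < b) :
    ∫ s in (0 : ℝ)..1, s ^ (a - 1) * (1 - s) ^ (b - 1) = Gamma a * Gamma b / Gamma (a + b) := by
  have hbeta : Complex.betaIntegral a b =
      ((∫ s in (0 : ℝ)..1, s ^ (a - 1) * (1 - s) ^ (b - 1) : ℝ) : ℂ) := by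
    rw [← intervalIntegral.integral_ofReal]
    exact intervalIntegral.integral_congr fun s hs =>
      (ofReal_rpow_mul_one_sub_rpow (Set.uIcc_of_le (zero_le_one' ℝ) ▸ hs) a b).symm
  have h := Complex.Gamma_mul_Gamma_eq_betaIntegral (s := a) (t := b) (by simpa) (by simpa)
  rw [← Complex.ofReal_add, hbeta, Complex.Gamma_ofReal, Complex.Gamma_ofReal,
    Complex.Gamma_ofReal] at h
  rw [eq_div_iff (Gamma_pos_of_pos (add_pos ha hb)).ne', mul_comm]
  exact_mod_cast h.symm

lemma one_sub_pow_mul_rpow_mul_one_sub_rpow {s : ℝ} (hs0 : 0 < s) (hs1 : s < 1) (n : ℕ)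
    (ρ β : ℝ) :
    (1 - s ^ n) * s ^ (ρ - 1) * (1 - s) ^ (β - 1) =
      ∑ j ∈ range n, s ^ ((j + ρ) - 1) * (1 - s) ^ ((β + 1) - 1) := by
  have hpow : ∀ j : ℕ, s ^ ((j + ρ) - 1) = s ^ j * s ^ (ρ - 1) := fun j => by
    rw [add_sub_assoc, rpow_add hs0, rpow_natCast]
  have hβ : (1 - s) ^ ((β + 1) - 1) = (1 - s) * (1 - s) ^ (β - 1) := by
    rw [show β + 1 - 1 = 1 + (β - 1) by ring, rpow_add (sub_pos.2 hs1), rpow_one]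
  simp only [hpow, hβ, ← sum_mul]
  rw [← mul_neg_geom_sum]
  ring

lemma integral_one_sub_pow_mul_rpow_mul_one_sub_rpow {ρ β : ℝ} (hρ : 0 < ρ) (hβ : -1 < β)
    (n : ℕ) :
    ∫ s in (0 : ℝ)..1, (1 - s ^ n) * s ^ (ρ - 1) * (1 - s) ^ (β - 1) =
      ∑ j ∈ range n, Gamma (j + ρ) * Gamma (β + 1) / Gamma (j + 1 + β + ρ) := by
  have hβ' : 0 < β + 1 := by linarith
  have hsplit : ∀ᵐ s, s ∈ Set.uIoc (0 : ℝ) 1 → (1 - s ^ n) * s ^ (ρ - 1) * (1 - s) ^ (β - 1) =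
      ∑ j ∈ range n, s ^ ((j + ρ) - 1) * (1 - s) ^ ((β + 1) - 1) := by
    filter_upwards [Measure.ae_ne volume (1 : ℝ)] with s hs1 hs
    rw [Set.uIoc_of_le zero_le_one] at hs
    exact one_sub_pow_mul_rpow_mul_one_sub_rpow hs.1 (lt_of_le_of_ne hs.2 hs1) n ρ β
  rw [intervalIntegral.integral_congr_ae hsplit, intervalIntegral.integral_finsetSum fun j _ =>
    intervalIntegrable_rpow_mul_one_sub_rpow (by positivity) hβ']
  refine sum_congr rfl fun j _ => ?_
  rw [integral_rpow_mul_one_sub_rpow (by positivity) hβ']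
  congr 2
  ring

section Gautschi

variable {t z : ℝ} (ht0 : 0 < t) (ht1 : t < 1) (hz : 0 < z)
include ht0 ht1 hz

lemma Gamma_add_le_rpow_mul_Gamma : Gamma (z + t) ≤ z ^ t * Gamma z := by
  have h := Gamma_mul_add_mul_le_rpow_Gamma_mul_rpow_Gamma (s := z) (t := z + 1) hz
    (by linarith) (sub_pos.2 ht1) ht0 (sub_add_cancel 1 t)
  have hG := Gamma_pos_of_pos hz
  rw [show (1 - t) * z + t * (z + 1) = z + t by ring, Gamma_add_one hz.ne',
    mul_rpow hz.le hG.le, mul_left_comm, ← rpow_add hG, sub_add_cancel, rpow_one] at h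
  exact h

lemma mul_Gamma_le_rpow_mul_Gamma_add : z * Gamma z ≤ (z + t) ^ (1 - t) * Gamma (z + t) := by
  have hzt : 0 < z + t := by linarith
  have h := Gamma_mul_add_mul_le_rpow_Gamma_mul_rpow_Gamma (s := z + t) (t := z + t + 1) hzt
    (by linarith) ht0 (sub_pos.2 ht1) (add_sub_cancel t 1)
  have hG := Gamma_pos_of_pos hzt
  rw [show t * (z + t) + (1 - t) * (z + t + 1) = z + 1 by ring, Gamma_add_one hz.ne',
    Gamma_add_one hzt.ne', mul_rpow hzt.le hG.le, mul_left_comm, ← rpow_add hG,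
    add_sub_cancel, rpow_one] at h
  exact h

end Gautschi

lemma isEquivalent_Gamma_div_Gamma_add {t : ℝ} (ht0 : 0 < t) (ht1 : t < 1) :
    (fun x => Gamma x / Gamma (x + t)) ~[atTop] fun x => x ^ (-t) := by
  refine isEquivalent_of_tendsto_one ?_
  have hlim : Tendsto (fun x : ℝ => (1 + t / x) ^ (1 - t)) atTop (𝓝 1) := by
    simpa using ((tendsto_const_nhds.div_atTop tendsto_id).const_add 1).rpow_const
      (p := 1 - t) (Or.inr (sub_pos.2 ht1).le)
  refine tendsto_of_tendsto_of_tendsto_of_le_of_le' tendsto_const_nhds hlim ?_ ?_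
  all_goals filter_upwards [eventually_gt_atTop 0] with x hx
  all_goals
    have hGt := Gamma_pos_of_pos (add_pos hx ht0)
    simp only [Pi.div_apply, rpow_neg hx.le, div_inv_eq_mul, div_mul_eq_mul_div]
  · rw [one_le_div hGt, mul_comm]
    exact Gamma_add_le_rpow_mul_Gamma ht0 ht1 hx
  · rw [div_le_iff₀ hGt]
    have hrw : (1 + t / x) ^ (1 - t) = x ^ t / x * (x + t) ^ (1 - t) := by
      rw [one_add_div hx.ne', div_rpow (by linarith) hx.le, rpow_sub hx, rpow_one]
      field_simp
    calc Gamma x * x ^ t = x ^ t / x * (x * Gamma x) := by field_simp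
      _ ≤ x ^ t / x * ((x + t) ^ (1 - t) * Gamma (x + t)) :=
        mul_le_mul_of_nonneg_left (mul_Gamma_le_rpow_mul_Gamma_add ht0 ht1 hx) (by positivity)
      _ = _ := by rw [hrw, mul_assoc]

lemma isEquivalent_natCast_add (ρ : ℝ) : (fun j : ℕ => (j + ρ : ℝ)) ~[atTop] fun j => (j : ℝ) :=
  (IsEquivalent.refl.add_isLittleO
    ((isLittleO_const_id_atTop ρ).comp_tendsto tendsto_natCast_atTop_atTop))

lemma isEquivalent_Gamma_natCast_add_div {t : ℝ} (ht0 : 0 < t) (ht1 : t < 1) (ρ : ℝ) :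
    (fun j : ℕ => Gamma (j + ρ) / Gamma (j + ρ + t)) ~[atTop] fun j => (j : ℝ) ^ (-t) :=
  ((isEquivalent_Gamma_div_Gamma_add ht0 ht1).comp_tendsto
    (tendsto_atTop_add_const_right _ ρ tendsto_natCast_atTop_atTop)).trans
    ((isEquivalent_natCast_add ρ).rpow fun j => Nat.cast_nonneg j)

lemma isEquivalent_add_one_rpow_sub_rpow {p : ℝ} (hp : p ≠ 0) :
    (fun x : ℝ => (x + 1) ^ p - x ^ p) ~[atTop] fun x => p * x ^ (p - 1) := by
  -- the ratio is the difference quotient of `y ↦ y ^ p` at `1` with step `x⁻¹`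
  refine isEquivalent_of_tendsto_one ?_
  have hslope : Tendsto (slope (fun y : ℝ => y ^ p) 1) (𝓝[≠] 1) (𝓝 p) := by
    simpa using hasDerivAt_iff_tendsto_slope.1
      (hasDerivAt_rpow_const (x := 1) (p := p) (Or.inl one_ne_zero))
  have hinv : Tendsto (fun x : ℝ => 1 + x⁻¹) atTop (𝓝[≠] 1) := by
    refine tendsto_nhdsWithin_of_tendsto_nhds_of_eventually_within _ ?_ ?_
    · simpa using tendsto_inv_atTop_zero.const_add (1 : ℝ)
    · filter_upwards [eventually_gt_atTop 0] with x hx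
      simpa using (inv_pos.2 hx).ne'
  have := (hslope.comp hinv).div_const p
  rw [div_self hp] at this
  refine this.congr' ?_
  filter_upwards [eventually_gt_atTop 0] with x hx
  have hxp : x ^ p = x * x ^ (p - 1) := by
    rw [rpow_sub hx, rpow_one]; field_simp
  simp only [Function.comp_apply, slope_def_field, one_rpow, Pi.div_apply]
  rw [show 1 + x⁻¹ = (x + 1) / x by field_simp, div_rpow (by linarith) hx.le]
  have hx1 : 0 < x ^ (p - 1) := rpow_pos_of_pos hx _
  rw [hxp]
  field_simp
  ring

theorem Asymptotics.IsEquivalent.sum_range {f g : ℕ → ℝ} (h : f ~[atTop] g) (hg : 0 ≤ g)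
    (h'g : Tendsto (fun n => ∑ i ∈ range n, g i) atTop atTop) :
    (fun n => ∑ i ∈ range n, f i) ~[atTop] fun n => ∑ i ∈ range n, g i := by
  simpa only [IsEquivalent, Pi.sub_def, sum_sub_distrib] using h.isLittleO.sum_range hg h'g

lemma sum_range_add_one_rpow_sub_rpow {p : ℝ} (hp : p ≠ 0) (n : ℕ) :
    ∑ j ∈ range n, (((j : ℝ) + 1) ^ p - (j : ℝ) ^ p) = (n : ℝ) ^ p := by
  simpa [zero_rpow hp] using sum_range_sub (fun j : ℕ => (j : ℝ) ^ p) n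

lemma isEquivalent_sum_range_Gamma_div {β : ℝ} (hβ1 : -1 < β) (hβ0 : β < 0) (ρ : ℝ) :
    (fun n : ℕ => ∑ j ∈ range n, Gamma (j + ρ) * Gamma (β + 1) / Gamma (j + 1 + β + ρ))
      ~[atTop] fun n => Gamma (β + 1) / (-β) * (n : ℝ) ^ (-β) := by
  set c := Gamma (β + 1) / (-β)
  have hc : 0 < c := div_pos (Gamma_pos_of_pos (by linarith)) (neg_pos.2 hβ0)
  set g : ℕ → ℝ := fun j => c * (((j : ℝ) + 1) ^ (-β) - (j : ℝ) ^ (-β))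
  have hterm :
      (fun j : ℕ => Gamma (j + ρ) * Gamma (β + 1) / Gamma (j + 1 + β + ρ)) ~[atTop] g := by
    have hΓ := (IsEquivalent.refl (u := fun _ : ℕ => Gamma (β + 1))).mul
      (isEquivalent_Gamma_natCast_add_div (t := β + 1) (by linarith) (by linarith) ρ)
    have hg := (IsEquivalent.refl (u := fun _ : ℕ => c)).mul
      ((isEquivalent_add_one_rpow_sub_rpow (neg_ne_zero.2 hβ0.ne)).comp_tendsto
        tendsto_natCast_atTop_atTop)
    refine (hΓ.congr_left (Eventually.of_forall fun j => ?_)).trans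
      (hg.congr_right (Eventually.of_forall fun j => ?_)).symm
    · rw [Pi.mul_apply, show (j : ℝ) + ρ + (β + 1) = j + 1 + β + ρ by ring]
      ring
    · simp only [Pi.mul_apply, Function.comp_apply, c, neg_add']
      field_simp [hβ0.ne]
  have hsum_g : ∀ n : ℕ, ∑ j ∈ range n, g j = c * (n : ℝ) ^ (-β) := fun n => by
    rw [← mul_sum, sum_range_add_one_rpow_sub_rpow (neg_ne_zero.2 hβ0.ne)]
  have hg_nonneg : 0 ≤ g := fun j => mul_nonneg hc.le <| sub_nonneg.2 <|
    rpow_le_rpow (Nat.cast_nonneg j) (by linarith) (neg_nonneg.2 hβ0.le)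
  have hg_sum_tendsto : Tendsto (fun n => ∑ j ∈ range n, g j) atTop atTop := by
    simpa only [hsum_g, Function.comp_def] using ((tendsto_rpow_atTop (neg_pos.2 hβ0)).comp
      tendsto_natCast_atTop_atTop).const_mul_atTop hc
  exact (hterm.sum_range hg_nonneg hg_sum_tendsto).congr_right (Eventually.of_forall hsum_g)

theorem beta_splitting_negative_beta (ρ β : ℝ) (hρ : 0 < ρ) (hβ1 : -1 < β) (hβ0 : β < 0)
    (ζ : ℕ → ℝ)
    (hζ : ∀ n : ℕ, ζ n = ∫ s in (0 : ℝ)..1, (1 - s ^ n) * s ^ (ρ - 1) * (1 - s) ^ (β - 1)) :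
    (∀ n : ℕ, ζ n = ∑ j ∈ Finset.range n,
      Real.Gamma (j + ρ) * Real.Gamma (β + 1) / Real.Gamma (j + 1 + β + ρ)) ∧
    Tendsto (fun n : ℕ => ζ n / ((n : ℝ) ^ (-β)))
      atTop (nhds (Real.Gamma (1 + β) / (-β))) := by
  have hsum : ∀ n : ℕ,
      ζ n = ∑ j ∈ range n, Gamma (j + ρ) * Gamma (β + 1) / Gamma (j + 1 + β + ρ) :=
    fun n => (hζ n).trans (integral_one_sub_pow_mul_rpow_mul_one_sub_rpow hρ hβ1 n)
  refine ⟨hsum, ?_⟩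
  have hequiv : ζ ~[atTop] fun n => Gamma (β + 1) / (-β) * (n : ℝ) ^ (-β) :=
    (isEquivalent_sum_range_Gamma_div hβ1 hβ0 ρ).congr_left
      (Eventually.of_forall fun n => (hsum n).symm)
  rw [add_comm 1 β]
  refine (hequiv.div (IsEquivalent.refl (u := fun n : ℕ => (n : ℝ) ^ (-β)))).tendsto_nhds_iff.2
    (tendsto_const_nhds.congr' ?_)
  filter_upwards [eventually_gt_atTop 0] with n hn
  simp only [Pi.div_apply]
  rw [mul_div_cancel_right₀ _ (rpow_pos_of_pos (Nat.cast_pos.2 hn) _).ne']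
end
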